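/- Let A be an m×m Hermitian matrix and ω(A) the 2m×2m skew-symmetric matrix whose (r,s)-block is [[0, a_{rs}],[-conj(a_{rs}), 0]]. Then -J_m ω(A) is Hermitian; and if A is moreover non-negative definite, then -J_m ω(A) is non-negative definite. -/

import Mathlib

open Matrix
open scoped Classical ComplexOrder

/-- The `2m × 2m` block-diagonal matrix `J_m` with diagonal blocks `[[0,1],[-1,0]]`. -/
def Jmat (m : ℕ) : Matrix (Fin (2 * m)) (Fin (2 * m)) ℂ :=
  fun i j => if i.val % 2 = 0 ∧ j.val = i.val + 1 then 1
    else if j.val % 2 = 0 ∧ i.val = j.val + 1 then -1 else 0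

/-- The skew-symmetric matrix `ω(A)` whose `(r,s)` block is
`[[0, a_{rs}], [-conj(a_{rs}), 0]]`. -/
def omegaH {m : ℕ} (A : Matrix (Fin m) (Fin m) ℂ) :
    Matrix (Fin (2 * m)) (Fin (2 * m)) ℂ := fun i j =>
  have hi : i.val / 2 < m := by have := i.isLt; omega
  have hj : j.val / 2 < m := by have := j.isLt; omega
  if i.val % 2 = 0 ∧ j.val % 2 = 1 then A ⟨i.val / 2, hi⟩ ⟨j.val / 2, hj⟩
  else if i.val % 2 = 1 ∧ j.val % 2 = 0 then
    -(starRingEnd ℂ) (A ⟨i.val / 2, hi⟩ ⟨j.val / 2, hj⟩)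
  else 0

/-!
Interleaving the coordinates, `2 r + p ↔ (r, p)`, turns `J_m` into `1 ⊗ J` and `ω(A)` into
`A ⊗ E₀₁ - Ā ⊗ E₁₀`, hence `-J_m ω(A)` into `Ā ⊗ E₀₀ + A ⊗ E₁₁`: a block diagonal matrix with
blocks `Ā = Aᵀ` and `A`, which are Hermitian, resp. positive semidefinite, together with `A`.
-/

open scoped Kronecker

def finInterleave (m : ℕ) : Fin (2 * m) ≃ Fin m × Fin 2 :=
  (finProdFinEquiv.trans (finCongr (Nat.mul_comm m 2))).symm

@[simp]
lemma finInterleave_symm_apply_val {m : ℕ} (x : Fin m × Fin 2) :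
    ((finInterleave m).symm x : ℕ) = x.2 + 2 * x.1 :=
  rfl

lemma reindex_neg_Jmat (m : ℕ) :
    reindex (finInterleave m) (finInterleave m) (-Jmat m) = 1 ⊗ₖ !![0, -1; 1, 0] := by
  ext ⟨r, p⟩ ⟨s, q⟩
  fin_cases p <;> fin_cases q <;> simp [Jmat, one_apply, Fin.ext_iff] <;> split_ifs <;>
    first | omega | simp

lemma reindex_omegaH {m : ℕ} (A : Matrix (Fin m) (Fin m) ℂ) :
    reindex (finInterleave m) (finInterleave m) (omegaH A) =
      A ⊗ₖ single 0 1 1 + Aᴴᵀ ⊗ₖ single 1 0 (-1) := by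
  ext ⟨r, p⟩ ⟨s, q⟩
  fin_cases p <;> fin_cases q <;> simp [omegaH, Nat.add_mul_div_left]

lemma Matrix.one_kronecker_mul_kronecker {R l m n p q : Type*} [CommSemiring R] [Fintype l]
    [DecidableEq l] [Fintype p] (B : Matrix l m R) (C : Matrix n p R) (D : Matrix p q R) :
    ((1 : Matrix l l R) ⊗ₖ C) * (B ⊗ₖ D) = B ⊗ₖ (C * D) := by
  rw [← mul_kronecker_mul, Matrix.one_mul]

lemma reindex_neg_Jmat_mul_omegaH {m : ℕ} (A : Matrix (Fin m) (Fin m) ℂ) :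
    reindex (finInterleave m) (finInterleave m) (-Jmat m * omegaH A) =
      Aᴴᵀ ⊗ₖ single 0 0 1 + A ⊗ₖ single 1 1 1 := by
  have h₀₁ : !![0, -1; 1, 0] * single 0 1 1 = single (1 : Fin 2) (1 : Fin 2) (1 : ℂ) := by
    ext i j; fin_cases i <;> fin_cases j <;> simp [mul_apply]
  have h₁₀ : !![0, -1; 1, 0] * single 1 0 (-1) = single (0 : Fin 2) (0 : Fin 2) (1 : ℂ) := by
    ext i j; fin_cases i <;> fin_cases j <;> simp [mul_apply]
  rw [← coe_reindexAlgEquiv ℂ ℂ, map_mul, coe_reindexAlgEquiv, reindex_neg_Jmat,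
    reindex_omegaH, mul_add, one_kronecker_mul_kronecker, one_kronecker_mul_kronecker, h₀₁, h₁₀,
    add_comm]

lemma Matrix.IsHermitian.kronecker {R m n : Type*} [CommSemiring R] [StarRing R]
    {B : Matrix m m R} {C : Matrix n n R} (hB : B.IsHermitian) (hC : C.IsHermitian) :
    (B ⊗ₖ C).IsHermitian :=
  (conjTranspose_kronecker B C).trans (by rw [hB.eq, hC.eq])

lemma Matrix.posSemidef_single_self_one {R n : Type*} [CommRing R] [PartialOrder R] [StarRing R]
    [StarOrderedRing R] [DecidableEq n] (i : n) :
    (single i i (1 : R)).PosSemidef := by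
  rw [← diagonal_single]
  exact .diagonal (Pi.single_nonneg.2 zero_le_one)

theorem negJ_omega_hermitian_and_posSemidef (m : ℕ) (A : Matrix (Fin m) (Fin m) ℂ)
    (hA : A.IsHermitian) :
    ((-(Jmat m)) * omegaH A).IsHermitian ∧
      (A.PosSemidef → ((-(Jmat m)) * omegaH A).PosSemidef) := by
  have hdecomp := reindex_neg_Jmat_mul_omegaH A
  rw [hA.eq, ← Equiv.eq_symm_apply, reindex_symm, reindex_apply, Equiv.symm_symm] at hdecomp
  have hE₀₀ := posSemidef_single_self_one (R := ℂ) (0 : Fin 2)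
  have hE₁₁ := posSemidef_single_self_one (R := ℂ) (1 : Fin 2)
  rw [hdecomp]
  refine ⟨?_, fun hApsd => ?_⟩
  · exact ((hA.transpose.kronecker hE₀₀.isHermitian).add (hA.kronecker hE₁₁.isHermitian)).submatrix _
  · exact ((hApsd.transpose.kronecker hE₀₀).add (hApsd.kronecker hE₁₁)).submatrix _
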